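/- arXiv:2410.23995 — 3 statements merged into one kernel-verified Lean document; each statement's English description precedes it below -/
import Mathlib

section
/- Let μ be a nonnegative measure on ℝ^k, c > 0, δ ∈ (0, 1/2), and t ∈ (0,T]. Then ∫₀^t (t−s)^(−2δ) ∫_{ℝ^k} exp(−c(t−s)|ξ|²) μ(dξ) ds ≤ C ∫_{ℝ^k} (1+|ξ|²)^(2δ−1) μ(dξ), for a constant C depending only on c, δ, T. -/
/-!
By Tonelli it suffices to bound, for each `a = |ξ|² ≥ 0`, the time integral
`∫₀ᵗ (t-s)^(-2δ) e^{-c(t-s)a} ds`. Since `t - s ≤ T`, the factor `e^{-c(t-s)a}` is at most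
`e^{cT} e^{-c(1+a)(t-s)}`, and extending the integral to `(0, ∞)` gives a Gamma integral equal to
`Γ(1-2δ) (c(1+a))^(2δ-1)`. Tonelli needs `μ` to be s-finite, which holds as soon as the right-hand
side is finite (otherwise there is nothing to prove) because its integrand is positive.
-/

open MeasureTheory Set ENNReal Real

theorem sFinite_of_lintegral_ne_top {α : Type*} [MeasurableSpace α] {μ : Measure α}
    {f : α → ℝ≥0∞} (hf : AEMeasurable f μ) (hf_ne_zero : ∀ᵐ x ∂μ, f x ≠ 0)
    (hf_int : ∫⁻ x, f x ∂μ ≠ ∞) : SFinite μ :=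
  have : IsFiniteMeasure (μ.withDensity f) := isFiniteMeasure_withDensity hf_int
  sFinite_of_absolutelyContinuous (withDensity_absolutelyContinuous' hf hf_ne_zero)

theorem lintegral_Ioi_rpow_mul_exp_neg_mul {a r : ℝ} (ha : 0 < a) (hr : 0 < r) :
    ∫⁻ u in Ioi 0, ENNReal.ofReal (u ^ (a - 1) * exp (-(r * u)))
      = ENNReal.ofReal ((1 / r) ^ a * Gamma a) := by
  have hint : IntegrableOn (fun u : ℝ => u ^ (a - 1) * exp (-(r * u))) (Ioi 0) := by
    refine (integrableOn_rpow_mul_exp_neg_mul_rpow (s := a - 1) (by linarith) zero_lt_one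
      hr).congr_fun (fun u _ => ?_) measurableSet_Ioi
    simp only [Real.rpow_one, neg_mul]
  rw [← integral_rpow_mul_exp_neg_mul_Ioi ha hr, ofReal_integral_eq_lintegral_ofReal hint]
  filter_upwards [self_mem_ae_restrict measurableSet_Ioi] with u (hu : 0 < u)
  positivity

theorem lintegral_Ioc_comp_sub_le_lintegral_Ioi (f : ℝ → ℝ≥0∞) (t : ℝ) :
    ∫⁻ s in Ioc 0 t, f (t - s) ≤ ∫⁻ u in Ioi 0, f u := by
  have hpre : (fun s => t - s) ⁻¹' Ici 0 = Iic t := by ext s; simp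
  calc ∫⁻ s in Ioc 0 t, f (t - s) ≤ ∫⁻ s in Iic t, f (t - s) :=
        lintegral_mono_set Ioc_subset_Iic_self
    _ = ∫⁻ u in Ici 0, f u := by
        rw [← hpre]
        exact (Measure.measurePreserving_sub_left volume t).setLIntegral_comp_preimage_emb
          (Homeomorph.subLeft t).measurableEmbedding f _
    _ = ∫⁻ u in Ioi 0, f u := setLIntegral_congr Ioi_ae_eq_Ici.symm

theorem lintegral_Ioc_rpow_mul_exp_le {c T δ a t : ℝ} (hc : 0 < c) (hδ : δ < 1 / 2) (ha : 0 ≤ a)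
    (htT : t ≤ T) :
    ∫⁻ s in Ioc 0 t, ENNReal.ofReal ((t - s) ^ (-(2 * δ))) *
        ENNReal.ofReal (exp (-c * (t - s) * a))
      ≤ ENNReal.ofReal (exp (c * T) * c ^ (2 * δ - 1) * Gamma (1 - 2 * δ)) *
        ENNReal.ofReal ((1 + a) ^ (2 * δ - 1)) := by
  set r := c * (1 + a)
  have hr : 0 < r := by positivity
  have hΓ : 0 < Gamma (1 - 2 * δ) := Gamma_pos_of_pos (by linarith)
  have hexp : ∀ s ∈ Ioc 0 t, exp (-c * (t - s) * a) ≤ exp (c * T) * exp (-(r * (t - s))) := by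
    intro s hs
    rw [← exp_add]
    exact exp_le_exp.2 (by nlinarith [hs.1])
  calc ∫⁻ s in Ioc 0 t, ENNReal.ofReal ((t - s) ^ (-(2 * δ))) *
        ENNReal.ofReal (exp (-c * (t - s) * a))
      ≤ ∫⁻ s in Ioc 0 t, ENNReal.ofReal (exp (c * T)) *
          ENNReal.ofReal ((t - s) ^ ((1 - 2 * δ) - 1) * exp (-(r * (t - s)))) := by
        refine setLIntegral_mono (by fun_prop) fun s hs => ?_
        have hts : 0 ≤ t - s := sub_nonneg.2 hs.2
        rw [← ofReal_mul (rpow_nonneg hts _), ← ofReal_mul (by positivity)]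
        refine ofReal_le_ofReal ?_
        calc (t - s) ^ (-(2 * δ)) * exp (-c * (t - s) * a)
            ≤ (t - s) ^ (-(2 * δ)) * (exp (c * T) * exp (-(r * (t - s)))) :=
              mul_le_mul_of_nonneg_left (hexp s hs) (rpow_nonneg hts _)
          _ = exp (c * T) * ((t - s) ^ ((1 - 2 * δ) - 1) * exp (-(r * (t - s)))) := by
              ring_nf
    _ ≤ ENNReal.ofReal (exp (c * T)) *
          ∫⁻ u in Ioi 0, ENNReal.ofReal (u ^ ((1 - 2 * δ) - 1) * exp (-(r * u))) := by
        rw [lintegral_const_mul' _ _ ofReal_ne_top]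
        exact mul_le_mul_right (lintegral_Ioc_comp_sub_le_lintegral_Ioi
          (fun u => ENNReal.ofReal (u ^ ((1 - 2 * δ) - 1) * exp (-(r * u)))) t) _
    _ = ENNReal.ofReal (exp (c * T) * c ^ (2 * δ - 1) * Gamma (1 - 2 * δ)) *
          ENNReal.ofReal ((1 + a) ^ (2 * δ - 1)) := by
        rw [lintegral_Ioi_rpow_mul_exp_neg_mul (by linarith) hr, ← ofReal_mul (by positivity),
          ← ofReal_mul (by positivity)]
        congr 1
        rw [one_div, inv_rpow hr.le, ← rpow_neg hr.le, neg_sub, mul_rpow hc.le (by positivity)]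
        ring

theorem lintegral_Ioc_rpow_mul_lintegral_exp_le {α : Type*} [MeasurableSpace α] (μ : Measure α)
    [SFinite μ] {q : α → ℝ} (hq : Measurable q) (hq_nonneg : ∀ ξ, 0 ≤ q ξ) {c T δ t : ℝ}
    (hc : 0 < c) (hδ : δ < 1 / 2) (htT : t ≤ T) :
    ∫⁻ s in Ioc 0 t, ENNReal.ofReal ((t - s) ^ (-(2 * δ))) *
        ∫⁻ ξ, ENNReal.ofReal (exp (-c * (t - s) * q ξ)) ∂μ
      ≤ ENNReal.ofReal (exp (c * T) * c ^ (2 * δ - 1) * Gamma (1 - 2 * δ)) *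
        ∫⁻ ξ, ENNReal.ofReal ((1 + q ξ) ^ (2 * δ - 1)) ∂μ := by
  simp_rw [← lintegral_const_mul' _ _ ofReal_ne_top]
  rw [lintegral_lintegral_swap (by fun_prop)]
  exact lintegral_mono fun ξ => lintegral_Ioc_rpow_mul_exp_le hc hδ (hq_nonneg ξ) htT

theorem stmt_7_general (k : ℕ) (c T : ℝ) (hc : 0 < c) (δ : ℝ)
    (hδ : δ ∈ Set.Ioo (0:ℝ) (1/2)) :
    ∃ C : ℝ, 0 < C ∧
      ∀ (μ : Measure (EuclideanSpace ℝ (Fin k))), ∀ t ∈ Set.Ioc (0:ℝ) T,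
        (∫⁻ s in Set.Ioc (0:ℝ) t,
            ENNReal.ofReal ((t - s) ^ (-(2*δ))) *
              ∫⁻ ξ, ENNReal.ofReal (Real.exp (-c * (t - s) * ‖ξ‖ ^ 2)) ∂μ)
          ≤ ENNReal.ofReal C *
              ∫⁻ ξ, ENNReal.ofReal ((1 + ‖ξ‖ ^ 2) ^ (2*δ - 1)) ∂μ := by
  have hΓ : 0 < Gamma (1 - 2 * δ) := Gamma_pos_of_pos (by linarith [hδ.2])
  refine ⟨exp (c * T) * c ^ (2 * δ - 1) * Gamma (1 - 2 * δ), by positivity, fun μ t ht => ?_⟩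
  by_cases hfin : ∫⁻ ξ, ENNReal.ofReal ((1 + ‖ξ‖ ^ 2) ^ (2 * δ - 1)) ∂μ = ∞
  · rw [hfin, mul_top (by positivity)]
    exact le_top
  have : SFinite μ := sFinite_of_lintegral_ne_top (by fun_prop)
    (ae_of_all _ fun ξ => by positivity) hfin
  exact lintegral_Ioc_rpow_mul_lintegral_exp_le μ (by fun_prop) (fun ξ => by positivity) hc hδ.2
    ht.2

theorem stmt_7 (k : ℕ) (c T : ℝ) (hc : 0 < c) (hT : 0 < T) (δ : ℝ)
    (hδ : δ ∈ Set.Ioo (0:ℝ) (1/2)) :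
    ∃ C : ℝ, 0 < C ∧
      ∀ (μ : Measure (EuclideanSpace ℝ (Fin k))), ∀ t ∈ Set.Ioc (0:ℝ) T,
        (∫⁻ s in Set.Ioc (0:ℝ) t,
            ENNReal.ofReal ((t - s) ^ (-(2*δ))) *
              ∫⁻ ξ, ENNReal.ofReal (Real.exp (-c * (t - s) * ‖ξ‖ ^ 2)) ∂μ)
          ≤ ENNReal.ofReal C *
              ∫⁻ ξ, ENNReal.ofReal ((1 + ‖ξ‖ ^ 2) ^ (2*δ - 1)) ∂μ :=
  stmt_7_general k c T hc δ hδ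
end

section
/- Let k ≥ 1, c > 0, C > 0, δ ∈ (0,1). Suppose Γ satisfies the time-derivative Gaussian bound |∂_τ Γ(τ,x;s,y)| ≤ C (τ−s)^(−(k+2)/2) exp(−c|x−y|²/(τ−s)) for 0 ≤ s < τ ≤ T, and τ ↦ Γ(τ,x;s,y) is C¹. Then for 0 < t ≤ t+h ≤ T and x ∈ ℝ^k, ∫₀^t (t−s)^(δ−1) ∫_{ℝ^k} |Γ(t+h,x;s,y) − Γ(t,x;s,y)| dy ds ≤ C_δ h^δ, where C_δ depends only on δ, k, c, C. -/
/-!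
By the fundamental theorem of calculus and Fubini, for `0 ≤ s < t` the spatial `L¹` norm of the
increment `Γ(t + h, x; s, ·) - Γ(t, x; s, ·)` is at most
`∫_t^{t+h} ∫ C (τ - s)^{-(k+2)/2} exp(-c|x - y|² / (τ - s)) dy dτ`
`= C (π/c)^{k/2} log(1 + h/(t - s))`, since the Gaussian integral in `y` leaves exactly
`(τ - s)⁻¹`. After the substitution `u = t - s` it remains to bound
`∫₀^∞ u^{δ-1} log(1 + h/u) du` by `(4/δ² + 1/(1 - δ)) h^δ`, which follows from
`log(1 + x) ≤ x^p / p` with `p = δ/2` for `u ≤ h` and `p = 1` for `u > h`.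
-/

open MeasureTheory Set Real Module

section Gaussian

variable {V : Type*} [NormedAddCommGroup V] [InnerProductSpace ℝ V]

/-- `gaussianMajorant c C (τ - s) (x - y)` is the bound
`C (τ - s)^{-(k+2)/2} exp(-c|x - y|²/(τ - s))` on `∂_τ Γ(τ, x; s, y)`, with `k = finrank ℝ V`. -/
noncomputable def gaussianMajorant (c C r : ℝ) (z : V) : ℝ :=
  C * r ^ (-((finrank ℝ V : ℝ) + 2) / 2) * exp (-c * ‖z‖ ^ 2 / r)

theorem gaussianMajorant_nonneg {c C r : ℝ} (hC : 0 ≤ C) (hr : 0 ≤ r) (z : V) :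
    0 ≤ gaussianMajorant c C r z := by
  unfold gaussianMajorant; positivity

theorem gaussianMajorant_eq {c C r : ℝ} (z : V) :
    gaussianMajorant c C r z =
      C * r ^ (-((finrank ℝ V : ℝ) + 2) / 2) * exp (-(c / r) * ‖z‖ ^ 2) := by
  rw [gaussianMajorant]; ring_nf

variable [MeasurableSpace V] [BorelSpace V]

theorem measurable_gaussianMajorant (c C : ℝ) :
    Measurable fun p : ℝ × V => gaussianMajorant c C p.1 p.2 := by
  unfold gaussianMajorant; fun_prop

variable [FiniteDimensional ℝ V]

theorem integral_exp_neg_mul_norm_sub_sq {b : ℝ} (hb : 0 < b) (x : V) :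
    ∫ y, exp (-b * ‖x - y‖ ^ 2) = (π / b) ^ (finrank ℝ V / 2 : ℝ) := by
  rw [integral_sub_left_eq_self (fun v => exp (-b * ‖v‖ ^ 2)) volume x,
    GaussianFourier.integral_rexp_neg_mul_sq_norm hb]

theorem integrable_exp_neg_mul_norm_sub_sq {b : ℝ} (hb : 0 < b) (x : V) :
    Integrable fun y : V => exp (-b * ‖x - y‖ ^ 2) :=
  .of_integral_ne_zero <| by rw [integral_exp_neg_mul_norm_sub_sq hb]; positivity

theorem integrable_gaussianMajorant {c r : ℝ} (C : ℝ) (hc : 0 < c) (hr : 0 < r) (x : V) :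
    Integrable fun y => gaussianMajorant c C r (x - y) := by
  simp_rw [gaussianMajorant_eq]
  exact (integrable_exp_neg_mul_norm_sub_sq (div_pos hc hr) x).const_mul _

theorem integral_gaussianMajorant {c r : ℝ} (C : ℝ) (hc : 0 < c) (hr : 0 < r) (x : V) :
    ∫ y, gaussianMajorant c C r (x - y) = C * (π / c) ^ (finrank ℝ V / 2 : ℝ) * r⁻¹ := by
  have hpow : r ^ (-((finrank ℝ V : ℝ) + 2) / 2) * r ^ (finrank ℝ V / 2 : ℝ) = r⁻¹ := by
    rw [← rpow_add hr, ← rpow_neg_one]; ring_nf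
  simp_rw [gaussianMajorant_eq]
  rw [integral_const_mul, integral_exp_neg_mul_norm_sub_sq (div_pos hc hr) x, div_div_eq_mul_div,
    mul_div_right_comm, mul_rpow (by positivity) hr.le]
  linear_combination C * (π / c) ^ (finrank ℝ V / 2 : ℝ) * hpow

theorem integrable_gaussianMajorant_prod {c C s t : ℝ} (hc : 0 < c) (hC : 0 ≤ C) (hst : s < t)
    (t' : ℝ) (x : V) :
    Integrable (fun p : ℝ × V => gaussianMajorant c C (p.1 - s) (x - p.2))
      ((volume.restrict (Ioc t t')).prod volume) := by
  have hmeas : Measurable fun p : ℝ × V => gaussianMajorant c C (p.1 - s) (x - p.2) :=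
    (measurable_gaussianMajorant c C).comp
      ((measurable_fst.sub_const s).prodMk (measurable_const.sub measurable_snd))
  have hpos : ∀ᵐ τ ∂volume.restrict (Ioc t t'), 0 < τ - s :=
    ae_restrict_of_forall_mem measurableSet_Ioc fun τ hτ => by linarith [hτ.1]
  refine (integrable_prod_iff hmeas.aestronglyMeasurable).2
    ⟨hpos.mono fun τ hτ => integrable_gaussianMajorant C hc hτ x, ?_⟩
  have hcont : ContinuousOn (fun τ => C * (π / c) ^ (finrank ℝ V / 2 : ℝ) * (τ - s)⁻¹)
      (Icc t t') :=
    continuousOn_const.mul <| (continuousOn_id.sub continuousOn_const).inv₀ fun τ hτ =>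
      sub_ne_zero.2 (hst.trans_le hτ.1).ne'
  refine (hcont.integrableOn_Icc.mono_set Ioc_subset_Icc_self).congr ?_
  filter_upwards [hpos] with τ hτ
  simp_rw [Real.norm_of_nonneg (gaussianMajorant_nonneg hC hτ.le _)]
  exact (integral_gaussianMajorant C hc hτ x).symm

theorem integral_inv_sub_right {s t h : ℝ} (hst : s < t) (hh : 0 ≤ h) :
    ∫ τ in t..t + h, (τ - s)⁻¹ = log (1 + h / (t - s)) := by
  rw [intervalIntegral.integral_comp_sub_right (fun τ => τ⁻¹), integral_inv]
  · rw [add_sub_right_comm, add_div, div_self (sub_ne_zero.2 hst.ne')]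
  · rw [uIcc_of_le (by linarith)]; exact fun h0 => by linarith [h0.1]

theorem integral_abs_sub_le_of_abs_deriv_le_gaussianMajorant {F : ℝ → V → ℝ} {c C s t h : ℝ}
    (hc : 0 < c) (hC : 0 ≤ C) (hst : s < t) (hh : 0 ≤ h) (x : V)
    (hFd : ∀ y, ∀ τ ∈ Icc t (t + h), DifferentiableAt ℝ (F · y) τ)
    (hF' : ∀ y, ∀ τ ∈ Icc t (t + h), |deriv (F · y) τ| ≤ gaussianMajorant c C (τ - s) (x - y)) :
    ∫ y, |F (t + h) y - F t y| ≤
      C * (π / c) ^ (finrank ℝ V / 2 : ℝ) * log (1 + h / (t - s)) := by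
  set G : ℝ × V → ℝ := fun p => gaussianMajorant c C (p.1 - s) (x - p.2)
  have hG := integrable_gaussianMajorant_prod hc hC hst (t + h) x
  have hFTC : ∀ᵐ y, |F (t + h) y - F t y| ≤ ∫ τ in Ioc t (t + h), G (τ, y) := by
    filter_upwards [hG.prod_left_ae] with y hGy
    rw [← intervalIntegral.integral_of_le (by linarith)]
    exact norm_sub_le_integral_of_norm_deriv_le_of_le (by linarith)
      (fun τ hτ => (hFd y τ hτ).continuousAt.continuousWithinAt)
      (fun τ hτ => (hFd y τ (Ioo_subset_Icc_self hτ)).differentiableWithinAt)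
      (.of_forall fun τ hτ => hF' y τ (Ioo_subset_Icc_self hτ))
      ((intervalIntegrable_iff_integrableOn_Ioc_of_le (by linarith)).2 hGy)
  calc ∫ y, |F (t + h) y - F t y|
      ≤ ∫ y, ∫ τ in Ioc t (t + h), G (τ, y) :=
        integral_mono_of_nonneg (.of_forall fun _ => abs_nonneg _) hG.integral_prod_right hFTC
    _ = ∫ τ in Ioc t (t + h), ∫ y, G (τ, y) := (integral_integral_swap hG).symm
    _ = ∫ τ in Ioc t (t + h), C * (π / c) ^ (finrank ℝ V / 2 : ℝ) * (τ - s)⁻¹ :=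
        setIntegral_congr_fun measurableSet_Ioc fun τ hτ =>
          integral_gaussianMajorant C hc (sub_pos.2 (hst.trans hτ.1)) x
    _ = C * (π / c) ^ (finrank ℝ V / 2 : ℝ) * log (1 + h / (t - s)) := by
        rw [integral_const_mul, ← intervalIntegral.integral_of_le (by linarith),
          integral_inv_sub_right hst hh]

end Gaussian

section Reflection

variable {E : Type*} [NormedAddCommGroup E] {t : ℝ}

theorem integrableOn_Ioc_comp_sub_left {g : ℝ → E} (ht : 0 ≤ t)
    (hg : IntegrableOn g (Ioc 0 t)) :
    IntegrableOn (fun s => g (t - s)) (Ioc 0 t) := by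
  have := ((intervalIntegrable_iff_integrableOn_Ioc_of_le ht).2 hg).comp_sub_left t
  rw [sub_zero, sub_self] at this
  exact (intervalIntegrable_iff_integrableOn_Ioc_of_le ht).1 this.symm

theorem setIntegral_Ioc_comp_sub_left [NormedSpace ℝ E] (g : ℝ → E) (ht : 0 ≤ t) :
    ∫ s in Ioc 0 t, g (t - s) = ∫ u in Ioc 0 t, g u := by
  rw [← intervalIntegral.integral_of_le ht, intervalIntegral.integral_comp_sub_left, sub_self,
    sub_zero, intervalIntegral.integral_of_le ht]

end Reflection

theorem log_one_add_le_rpow_div {x p : ℝ} (hx : 0 ≤ x) (hp : 0 < p) (hp1 : p ≤ 1) :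
    log (1 + x) ≤ x ^ p / p := by
  have hsub : (1 + x) ^ p ≤ 1 + x ^ p := by
    simpa using rpow_add_le_add_rpow zero_le_one hx hp.le hp1
  rw [le_div_iff₀ hp, mul_comm, ← log_rpow (by positivity)]
  linarith [log_le_sub_one_of_pos (show 0 < (1 + x) ^ p by positivity)]

section LogKernel

variable {δ h u : ℝ}

theorem rpow_mul_log_one_add_div_le_rpow (hδ : 0 < δ) (hδ1 : δ ≤ 2) (hh : 0 ≤ h) (hu : 0 < u) :
    u ^ (δ - 1) * log (1 + h / u) ≤ 2 / δ * h ^ (δ / 2) * u ^ (δ / 2 - 1) := by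
  have hlog := log_one_add_le_rpow_div (div_nonneg hh hu.le) (half_pos hδ) (by linarith)
  have hsplit : u ^ (δ - 1) = u ^ (δ / 2 - 1) * u ^ (δ / 2) := by
    rw [← rpow_add hu]; ring_nf
  calc u ^ (δ - 1) * log (1 + h / u) ≤ u ^ (δ - 1) * ((h / u) ^ (δ / 2) / (δ / 2)) := by
        gcongr
    _ = 2 / δ * h ^ (δ / 2) * u ^ (δ / 2 - 1) := by
        rw [div_rpow hh hu.le, hsplit]
        field_simp

theorem rpow_mul_log_one_add_div_le_mul_rpow (hh : 0 ≤ h) (hu : 0 < u) :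
    u ^ (δ - 1) * log (1 + h / u) ≤ h * u ^ (δ - 2) := by
  have hlog := log_one_add_le_rpow_div (div_nonneg hh hu.le) one_pos le_rfl
  rw [rpow_one, div_one] at hlog
  calc u ^ (δ - 1) * log (1 + h / u) ≤ u ^ (δ - 1) * (h / u) := by gcongr
    _ = h * u ^ (δ - 2) := by
        rw [show δ - 2 = δ - 1 - 1 by ring, rpow_sub_one hu.ne' (δ - 1)]
        ring

theorem rpow_mul_log_one_add_div_nonneg (hh : 0 ≤ h) (hu : 0 < u) :
    0 ≤ u ^ (δ - 1) * log (1 + h / u) := by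
  have : 0 ≤ log (1 + h / u) := log_nonneg (by linarith [div_nonneg hh hu.le])
  positivity

theorem integrableOn_rpow_mul_log_one_add_div (hδ : δ ∈ Ioo 0 1) (hh : 0 < h) :
    IntegrableOn (fun u => u ^ (δ - 1) * log (1 + h / u)) (Ioi 0) := by
  have hmeas : AEStronglyMeasurable (fun u => u ^ (δ - 1) * log (1 + h / u)) := by fun_prop
  have hdom {s : Set ℝ} {g : ℝ → ℝ} (hs : s ⊆ Ioi 0) (hs' : MeasurableSet s)
      (hg : IntegrableOn g s) (hfg : ∀ u > 0, u ^ (δ - 1) * log (1 + h / u) ≤ g u) :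
      IntegrableOn (fun u => u ^ (δ - 1) * log (1 + h / u)) s := by
    refine Integrable.mono' hg hmeas.restrict (ae_restrict_of_forall_mem hs' fun u hu => ?_)
    rw [norm_of_nonneg (rpow_mul_log_one_add_div_nonneg hh.le (hs hu))]
    exact hfg u (hs hu)
  rw [← Ioc_union_Ioi_eq_Ioi hh.le]
  exact .union
    (hdom Ioc_subset_Ioi_self measurableSet_Ioc
      ((intervalIntegral.intervalIntegrable_rpow' (by linarith [hδ.1])).1.const_mul _)
      fun u hu => rpow_mul_log_one_add_div_le_rpow hδ.1 (by linarith [hδ.2]) hh.le hu)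
    (hdom (Ioi_subset_Ioi hh.le) measurableSet_Ioi
      ((integrableOn_Ioi_rpow_of_lt (by linarith [hδ.2]) hh).const_mul _)
      fun u hu => rpow_mul_log_one_add_div_le_mul_rpow hh.le hu)

theorem integral_rpow_mul_log_one_add_div_le (hδ : δ ∈ Ioo 0 1) (hh : 0 < h) :
    ∫ u in Ioi 0, u ^ (δ - 1) * log (1 + h / u) ≤ (4 / δ ^ 2 + 1 / (1 - δ)) * h ^ δ := by
  obtain ⟨hδ0, hδ1⟩ := hδ
  have hf := integrableOn_rpow_mul_log_one_add_div ⟨hδ0, hδ1⟩ hh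
  have hsmall : ∫ u in Ioc 0 h, 2 / δ * h ^ (δ / 2) * u ^ (δ / 2 - 1) = 4 / δ ^ 2 * h ^ δ := by
    rw [integral_const_mul, ← intervalIntegral.integral_of_le hh.le,
      integral_rpow (.inl (by linarith)), sub_add_cancel, zero_rpow (by positivity), sub_zero,
      ← mul_div_assoc, mul_assoc, ← rpow_add hh, add_halves]
    field_simp
    ring
  have hlarge : ∫ u in Ioi h, h * u ^ (δ - 2) = 1 / (1 - δ) * h ^ δ := by
    have hpow : h ^ δ = h * h ^ (δ - 1) := by rw [rpow_sub_one hh.ne']; field_simp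
    have hδ1' : 1 - δ ≠ 0 := by linarith
    rw [integral_const_mul, integral_Ioi_rpow_of_lt (by linarith) hh,
      show δ - 2 + 1 = -(1 - δ) by ring, hpow, rpow_neg hh.le]
    field_simp
    rw [← rpow_add hh, sub_add_sub_cancel, sub_self, rpow_zero]
  rw [← Ioc_union_Ioi_eq_Ioi hh.le, setIntegral_union (Ioc_disjoint_Ioi le_rfl) measurableSet_Ioi
    (hf.mono_set Ioc_subset_Ioi_self) (hf.mono_set (Ioi_subset_Ioi hh.le))]
  calc _ ≤ (∫ u in Ioc 0 h, 2 / δ * h ^ (δ / 2) * u ^ (δ / 2 - 1)) +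
          ∫ u in Ioi h, h * u ^ (δ - 2) := by
        refine add_le_add ?_ ?_
        · exact setIntegral_mono_on (hf.mono_set Ioc_subset_Ioi_self)
            ((intervalIntegral.intervalIntegrable_rpow' (by linarith)).1.const_mul _)
            measurableSet_Ioc fun u hu =>
              rpow_mul_log_one_add_div_le_rpow hδ0 (by linarith) hh.le hu.1
        · exact setIntegral_mono_on (hf.mono_set (Ioi_subset_Ioi hh.le))
            ((integrableOn_Ioi_rpow_of_lt (by linarith) hh).const_mul _) measurableSet_Ioi
            fun u hu => rpow_mul_log_one_add_div_le_mul_rpow hh.le (hh.trans hu)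
    _ = (4 / δ ^ 2 + 1 / (1 - δ)) * h ^ δ := by rw [hsmall, hlarge]; ring

end LogKernel

theorem setIntegral_rpow_mul_le_of_le_log {δ h t A : ℝ} {φ : ℝ → ℝ} (hδ : δ ∈ Ioo 0 1)
    (hh : 0 < h) (ht : 0 ≤ t) (hA : 0 ≤ A) (hφ0 : ∀ s ∈ Ioc 0 t, 0 ≤ φ s)
    (hφ : ∀ s ∈ Ioo 0 t, φ s ≤ A * log (1 + h / (t - s))) :
    ∫ s in Ioc 0 t, (t - s) ^ (δ - 1) * φ s ≤ A * (4 / δ ^ 2 + 1 / (1 - δ)) * h ^ δ := by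
  have hI := integrableOn_rpow_mul_log_one_add_div hδ hh
  have hpointwise : ∀ s ∈ Ioc 0 t,
      (t - s) ^ (δ - 1) * φ s ≤ A * ((t - s) ^ (δ - 1) * log (1 + h / (t - s))) := by
    intro s hs
    rcases hs.2.eq_or_lt with rfl | hst
    · simp [zero_rpow (sub_ne_zero.2 hδ.2.ne)]
    calc (t - s) ^ (δ - 1) * φ s ≤ (t - s) ^ (δ - 1) * (A * log (1 + h / (t - s))) := by
          gcongr; exact hφ s ⟨hs.1, hst⟩
      _ = _ := by ring
  calc _ ≤ ∫ s in Ioc 0 t, A * ((t - s) ^ (δ - 1) * log (1 + h / (t - s))) :=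
        integral_mono_of_nonneg
          (ae_restrict_of_forall_mem measurableSet_Ioc fun s hs =>
            mul_nonneg (rpow_nonneg (sub_nonneg.2 hs.2) _) (hφ0 s hs))
          ((integrableOn_Ioc_comp_sub_left ht (hI.mono_set Ioc_subset_Ioi_self)).const_mul A)
          (ae_restrict_of_forall_mem measurableSet_Ioc hpointwise)
    _ = A * ∫ u in Ioc 0 t, u ^ (δ - 1) * log (1 + h / u) := by
        rw [integral_const_mul,
          setIntegral_Ioc_comp_sub_left (fun u => u ^ (δ - 1) * log (1 + h / u)) ht]
    _ ≤ A * ∫ u in Ioi 0, u ^ (δ - 1) * log (1 + h / u) := by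
        gcongr
        · exact ae_restrict_of_forall_mem measurableSet_Ioi fun u hu =>
            rpow_mul_log_one_add_div_nonneg hh.le hu
        · exact Ioc_subset_Ioi_self
    _ ≤ A * ((4 / δ ^ 2 + 1 / (1 - δ)) * h ^ δ) := by
        gcongr
        exact integral_rpow_mul_log_one_add_div_le hδ hh
    _ = _ := by ring

theorem stmt_12_general (k : ℕ) (c C T δ : ℝ) (hc : 0 < c) (hC : 0 < C)
    (hδ : δ ∈ Set.Ioo (0:ℝ) 1)
    (Γ : ℝ → EuclideanSpace ℝ (Fin k) → ℝ → EuclideanSpace ℝ (Fin k) → ℝ)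
    (hdiff : ∀ s : ℝ, ∀ x y, ∀ τ : ℝ, 0 ≤ s → s < τ → τ ≤ T →
      DifferentiableAt ℝ (fun τ' => Γ τ' x s y) τ)
    (hderiv : ∀ s : ℝ, ∀ x y, ∀ τ : ℝ, 0 ≤ s → s < τ → τ ≤ T →
      |deriv (fun τ' => Γ τ' x s y) τ|
        ≤ C * (τ - s) ^ (-((k : ℝ) + 2) / 2) * Real.exp (-c * ‖x - y‖ ^ 2 / (τ - s))) :
    ∃ Cδ : ℝ, 0 < Cδ ∧ ∀ t h : ℝ, 0 < t → 0 ≤ h → t + h ≤ T →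
      ∀ x : EuclideanSpace ℝ (Fin k),
      (∫ s in Set.Ioc (0:ℝ) t, (t - s) ^ (δ - 1) *
          ∫ y : EuclideanSpace ℝ (Fin k), |Γ (t + h) x s y - Γ t x s y|)
        ≤ Cδ * h ^ δ := by
  have hδ1 : 0 < 1 - δ := sub_pos.2 hδ.2
  refine ⟨C * (π / c) ^ ((k : ℝ) / 2) * (4 / δ ^ 2 + 1 / (1 - δ)),
    by have := hδ.1; positivity, fun t h ht hh htT x => ?_⟩
  rcases hh.eq_or_lt with rfl | hh
  · simp [zero_rpow hδ.1.ne']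
  refine setIntegral_rpow_mul_le_of_le_log hδ hh ht.le (by positivity)
    (fun s _ => integral_nonneg fun _ => abs_nonneg _) fun s hs => ?_
  have hbound := integral_abs_sub_le_of_abs_deriv_le_gaussianMajorant
    (F := fun τ y => Γ τ x s y) hc hC.le hs.2 hh.le x
    (fun y τ hτ => hdiff s x y τ hs.1.le (hs.2.trans_le hτ.1) (hτ.2.trans htT))
    (fun y τ hτ => by
      simpa [gaussianMajorant] using
        hderiv s x y τ hs.1.le (hs.2.trans_le hτ.1) (hτ.2.trans htT))
  rwa [finrank_euclideanSpace_fin] at hbound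

theorem stmt_12 (k : ℕ) (hk : 1 ≤ k) (c C T δ : ℝ) (hc : 0 < c) (hC : 0 < C) (hT : 0 < T)
    (hδ : δ ∈ Set.Ioo (0:ℝ) 1)
    (Γ : ℝ → EuclideanSpace ℝ (Fin k) → ℝ → EuclideanSpace ℝ (Fin k) → ℝ)
    (hdiff : ∀ s : ℝ, ∀ x y, ∀ τ : ℝ, 0 ≤ s → s < τ → τ ≤ T →
      DifferentiableAt ℝ (fun τ' => Γ τ' x s y) τ)
    (hderiv : ∀ s : ℝ, ∀ x y, ∀ τ : ℝ, 0 ≤ s → s < τ → τ ≤ T →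
      |deriv (fun τ' => Γ τ' x s y) τ|
        ≤ C * (τ - s) ^ (-((k : ℝ) + 2) / 2) * Real.exp (-c * ‖x - y‖ ^ 2 / (τ - s))) :
    ∃ Cδ : ℝ, 0 < Cδ ∧ ∀ t h : ℝ, 0 < t → 0 ≤ h → t + h ≤ T →
      ∀ x : EuclideanSpace ℝ (Fin k),
      (∫ s in Set.Ioc (0:ℝ) t, (t - s) ^ (δ - 1) *
          ∫ y : EuclideanSpace ℝ (Fin k), |Γ (t + h) x s y - Γ t x s y|)
        ≤ Cδ * h ^ δ :=
  stmt_12_general k c C T δ hc hC hδ Γ hdiff hderiv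
end

section
/- Let κ : [0,T] → [0,∞) be integrable, and let (f_n)_{n≥0} be a sequence of nonnegative Borel functions on [0,T] with sup_{t∈[0,T]} f_0(t) = M < ∞ and f_n(t) ≤ C ∫₀^t κ(t−s) f_{n−1}(s) ds for all n ≥ 1 and t ∈ [0,T]. Then ∑_{n=0}^∞ sup_{t∈[0,T]} f_n(t)^{1/p} < ∞ for every p ≥ 1; in particular sup_{t∈[0,T]} f_n(t) → 0 as n → ∞. -/
/-!
Weight the functions by `exp (-β t)`. Since `κ (t - s) exp (-β (t - s))` integrates to at most
`∫₀ᵀ κ u exp (-β u) du`, which tends to `0` as `β → ∞` by dominated convergence, for `β` large the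
iteration `f ↦ C ∫₀ᵗ κ (t - s) f s ds` halves the weighted sup norm. Hence
`sup f n ≤ M exp (β T) 2⁻ⁿ`, a geometric bound, which survives taking `p`-th roots.
-/

open MeasureTheory Set Filter Real Topology

theorem tendsto_setIntegral_mul_exp_neg_atTop {κ : ℝ → ℝ} {s : Set ℝ} (hs : MeasurableSet s)
    (hs0 : s ⊆ Ioi 0) (hκ : IntegrableOn κ s) :
    Tendsto (fun β : ℝ => ∫ u in s, κ u * exp (-(β * u))) atTop (𝓝 0) := by
  have hlim : ∀ u ∈ s, Tendsto (fun β : ℝ => κ u * exp (-(β * u))) atTop (𝓝 0) := fun u hu => by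
    simpa using (tendsto_exp_neg_atTop_nhds_zero.comp
      (tendsto_id.atTop_mul_const (hs0 hu))).const_mul (κ u)
  simpa using tendsto_integral_filter_of_dominated_convergence (fun u => ‖κ u‖)
    (F := fun β u => κ u * exp (-(β * u)))
    (Eventually.of_forall fun β => hκ.aestronglyMeasurable.mul (by fun_prop))
    ((eventually_ge_atTop 0).mono fun β hβ => (ae_restrict_iff' hs).2 <| ae_of_all _ fun u hu => by
      rw [norm_mul, norm_of_nonneg (exp_pos _).le]
      exact mul_le_of_le_one_right (norm_nonneg _)
        (exp_le_one_iff.2 (neg_nonpos.2 (mul_nonneg hβ (hs0 hu).le))))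
    hκ.norm ((ae_restrict_iff' hs).2 <| ae_of_all _ hlim)

theorem setIntegral_Ioc_comp_sub_mul_exp (κ : ℝ → ℝ) (β : ℝ) {t : ℝ} (ht : 0 ≤ t) :
    ∫ s in Ioc 0 t, κ (t - s) * exp (β * s) =
      exp (β * t) * ∫ u in Ioc 0 t, κ u * exp (-(β * u)) := by
  rw [← intervalIntegral.integral_of_le ht, ← intervalIntegral.integral_of_le ht,
    ← intervalIntegral.integral_const_mul]
  have hreflect := intervalIntegral.integral_comp_sub_left
    (fun u => exp (β * t) * (κ u * exp (-(β * u)))) t (a := 0) (b := t)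
  simp only [sub_self, sub_zero] at hreflect
  rw [← hreflect]
  congr 1
  ext s
  rw [mul_left_comm, ← exp_add]
  ring_nf

theorem integrableOn_Ioc_comp_sub_mul_exp {κ : ℝ → ℝ} {T t : ℝ} (hκ : IntegrableOn κ (Icc 0 T))
    (ht : t ∈ Icc 0 T) (β : ℝ) :
    IntegrableOn (fun s => κ (t - s) * exp (β * s)) (Ioc 0 t) := by
  have hκt : IntervalIntegrable κ volume 0 t :=
    (intervalIntegrable_iff_integrableOn_Icc_of_le ht.1).2 (hκ.mono_set (Icc_subset_Icc_right ht.2))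
  have hprod := (hκt.comp_sub_left t).mul_continuousOn (g := fun s => exp (β * s)) (by fun_prop)
  rw [sub_zero, sub_self] at hprod
  exact (intervalIntegrable_iff_integrableOn_Ioc_of_le ht.1).1 hprod.symm

theorem le_mul_pow_mul_exp_of_le_convolution {κ : ℝ → ℝ} {f : ℕ → ℝ → ℝ} {T C M q β : ℝ}
    (hκ0 : ∀ s, 0 ≤ κ s) (hκ : IntegrableOn κ (Icc 0 T)) (hC : 0 ≤ C) (hM : 0 ≤ M) (hβ : 0 ≤ β)
    (hq : C * ∫ u in Ioc 0 T, κ u * exp (-(β * u)) ≤ q)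
    (hf0 : ∀ n, ∀ t ∈ Icc 0 T, 0 ≤ f n t) (hfM : ∀ t ∈ Icc 0 T, f 0 t ≤ M)
    (hrec : ∀ n, ∀ t ∈ Icc 0 T, f (n + 1) t ≤ C * ∫ s in Ioc 0 t, κ (t - s) * f n s) :
    ∀ n, ∀ t ∈ Icc 0 T, f n t ≤ M * q ^ n * exp (β * t) := by
  have hweighted : IntegrableOn (fun u => κ u * exp (-(β * u))) (Icc 0 T) :=
    hκ.mul_continuousOn (by fun_prop) isCompact_Icc
  have hq0 : 0 ≤ q := (mul_nonneg hC (setIntegral_nonneg measurableSet_Ioc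
    fun u _ => mul_nonneg (hκ0 u) (exp_pos _).le)).trans hq
  intro n
  induction n with
  | zero =>
    intro t ht
    simpa using (hfM t ht).trans (le_mul_of_one_le_right hM (one_le_exp (mul_nonneg hβ ht.1)))
  | succ n ih =>
    intro t ht
    have hsub : Ioc 0 t ⊆ Icc 0 T := fun s hs => ⟨hs.1.le, hs.2.trans ht.2⟩
    calc f (n + 1) t ≤ C * ∫ s in Ioc 0 t, κ (t - s) * f n s := hrec n t ht
      _ ≤ C * ∫ s in Ioc 0 t, M * q ^ n * (κ (t - s) * exp (β * s)) := by
        refine mul_le_mul_of_nonneg_left ?_ hC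
        refine setIntegral_mono_of_nonneg (fun s hs => mul_nonneg (hκ0 _) (hf0 n s (hsub hs)))
          (fun s hs => ?_) ((integrableOn_Ioc_comp_sub_mul_exp hκ ht β).const_mul _)
        rw [mul_left_comm]
        exact mul_le_mul_of_nonneg_left (ih s (hsub hs)) (hκ0 _)
      _ = M * q ^ n * exp (β * t) * (C * ∫ u in Ioc 0 t, κ u * exp (-(β * u))) := by
        rw [integral_const_mul, setIntegral_Ioc_comp_sub_mul_exp κ β ht.1]; ring
      _ ≤ M * q ^ n * exp (β * t) * q := by
        gcongr
        refine hq.trans' (mul_le_mul_of_nonneg_left ?_ hC)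
        exact setIntegral_mono_set (hweighted.mono_set Ioc_subset_Icc_self)
          (ae_of_all _ fun u => mul_nonneg (hκ0 u) (exp_pos _).le)
          (Ioc_subset_Ioc_right ht.2).eventuallyLE
      _ = M * q ^ (n + 1) * exp (β * t) := by ring

theorem summable_iSup_rpow_of_le_geometric {ι : Type*} {g : ℕ → ι → ℝ} {B r p : ℝ}
    (hg0 : ∀ n i, 0 ≤ g n i) (hg : ∀ n i, g n i ≤ B * r ^ n) (hB : 0 ≤ B) (hr0 : 0 ≤ r)
    (hr1 : r < 1) (hp : 0 < p) :
    Summable fun n => ⨆ i, g n i ^ (1 / p) := by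
  have hrp : r ^ (1 / p) < 1 := rpow_lt_one hr0 hr1 (by positivity)
  refine Summable.of_nonneg_of_le (fun n => iSup_nonneg fun i => rpow_nonneg (hg0 n i) _)
    (fun n => Real.iSup_le (fun i => ?_) (by positivity))
    ((summable_geometric_of_lt_one (by positivity) hrp).mul_left (B ^ (1 / p)))
  calc g n i ^ (1 / p) ≤ (B * r ^ n) ^ (1 / p) := rpow_le_rpow (hg0 n i) (hg n i) (by positivity)
    _ = B ^ (1 / p) * (r ^ (1 / p)) ^ n := by
      rw [mul_rpow hB (by positivity), rpow_pow_comm hr0]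

theorem stmt_15_general (T : ℝ) (κ : ℝ → ℝ) (hκ0 : ∀ s, 0 ≤ κ s)
    (hκ : IntegrableOn κ (Set.Icc 0 T)) (C M : ℝ) (hC : 0 < C)
    (f : ℕ → ℝ → ℝ)
    (hf0 : ∀ n, ∀ t ∈ Set.Icc (0:ℝ) T, 0 ≤ f n t)
    (hM : ∀ t ∈ Set.Icc (0:ℝ) T, f 0 t ≤ M)
    (hrec : ∀ n : ℕ, 1 ≤ n → ∀ t ∈ Set.Icc (0:ℝ) T,
      f n t ≤ C * ∫ s in Set.Ioc (0:ℝ) t, κ (t - s) * f (n - 1) s) :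
    ∀ p : ℝ, 1 ≤ p →
      Summable (fun n : ℕ => ⨆ t : Set.Icc (0:ℝ) T, (f n t.1) ^ (1 / p)) ∧
      Tendsto (fun n : ℕ => ⨆ t : Set.Icc (0:ℝ) T, f n t.1) atTop (nhds 0) := by
  intro p hp
  obtain ⟨β, hβ, hβhalf⟩ : ∃ β : ℝ, 0 ≤ β ∧ C * ∫ u in Ioc 0 T, κ u * exp (-(β * u)) ≤ 1 / 2 := by
    have hlim := (tendsto_setIntegral_mul_exp_neg_atTop measurableSet_Ioc (fun _ hu => hu.1)
      (hκ.mono_set Ioc_subset_Icc_self)).const_mul C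
    rw [mul_zero] at hlim
    exact ((eventually_ge_atTop 0).and (hlim.eventually (ge_mem_nhds one_half_pos))).exists
  have hdecay := le_mul_pow_mul_exp_of_le_convolution hκ0 hκ hC.le (le_max_right M 0) hβ hβhalf
    hf0 (fun t ht => (hM t ht).trans (le_max_left M 0))
    (fun n t ht => by simpa using hrec (n + 1) (Nat.le_add_left 1 n) t ht)
  have hgeom : ∀ n (t : Icc (0 : ℝ) T), f n t ≤ max M 0 * exp (β * T) * (1 / 2) ^ n := by
    intro n t
    calc f n t ≤ max M 0 * (1 / 2) ^ n * exp (β * t) := hdecay n t t.2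
      _ ≤ max M 0 * (1 / 2) ^ n * exp (β * T) := by gcongr; exact t.2.2
      _ = max M 0 * exp (β * T) * (1 / 2) ^ n := by ring
  have hsum : ∀ q : ℝ, 0 < q → Summable fun n => ⨆ t : Icc (0 : ℝ) T, f n t ^ (1 / q) :=
    fun q hq => summable_iSup_rpow_of_le_geometric (fun n t => hf0 n t t.2) hgeom
      (by positivity) (by norm_num) (by norm_num) hq
  refine ⟨hsum p (by linarith), ?_⟩
  simpa using (hsum 1 one_pos).tendsto_atTop_zero

theorem stmt_15 (T : ℝ) (hT : 0 < T) (κ : ℝ → ℝ) (hκ0 : ∀ s, 0 ≤ κ s)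
    (hκ : IntegrableOn κ (Set.Icc 0 T)) (C M : ℝ) (hC : 0 < C)
    (f : ℕ → ℝ → ℝ) (hmeas : ∀ n, Measurable (f n))
    (hf0 : ∀ n, ∀ t ∈ Set.Icc (0:ℝ) T, 0 ≤ f n t)
    (hM : ∀ t ∈ Set.Icc (0:ℝ) T, f 0 t ≤ M)
    (hrec : ∀ n : ℕ, 1 ≤ n → ∀ t ∈ Set.Icc (0:ℝ) T,
      f n t ≤ C * ∫ s in Set.Ioc (0:ℝ) t, κ (t - s) * f (n - 1) s) :
    ∀ p : ℝ, 1 ≤ p →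
      Summable (fun n : ℕ => ⨆ t : Set.Icc (0:ℝ) T, (f n t.1) ^ (1 / p)) ∧
      Tendsto (fun n : ℕ => ⨆ t : Set.Icc (0:ℝ) T, f n t.1) atTop (nhds 0) :=
  stmt_15_general T κ hκ0 hκ C M hC f hf0 hM hrec
end
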